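/- arXiv:1503.04129 — 2 statements merged into one kernel-verified Lean document; each statement's English description precedes it below -/
import Mathlib

section
/- If P is a d-polytope in which some vertex v is joined by an edge to every other vertex of P, and the vertex figure P/v is a pyramid, then P itself is a pyramid. -/
/-!
Project centrally from `v` onto the hyperplane `f = c`: every other vertex `w` goes to the point
where the edge `[v, w]` crosses it. As every vertex is adjacent to `v`, these points span the vertex
figure, each of them is a vertex of it (an edge meets the hyperplane in a face of the slice), and
distinct vertices have distinct images (two vertices on one ray from `v` would make the nearer one
non-extreme). So the apex of the vertex figure is the image of exactly one vertex `w₀`, and every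
other vertex lies on a line through `v` and a point of the base `Q`. Hence all vertices but `w₀`
lie in the affine span of `v` and `Q`, and `w₀` does not: otherwise so would the apex, but that
span meets the hyperplane only in the affine span of `Q`.
-/

open Set

section Prelim

variable {E : Type*} [AddCommGroup E] [Module ℝ E] {F : Type*} [AddCommGroup F] [Module ℝ F]

/-- A polytope is the convex hull of a nonempty finite set of points. -/
def IsPolytope (P : Set E) : Prop :=
  ∃ S : Finset E, S.Nonempty ∧ P = convexHull ℝ (S : Set E)

/-- The dimension of a set: the dimension of its affine hull. -/
noncomputable def pdim (P : Set E) : ℕ :=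
  Module.finrank ℝ (affineSpan ℝ P).direction

/-- The number of vertices (extreme points). -/
noncomputable def numVertices (P : Set E) : ℕ :=
  (P.extremePoints ℝ).ncard

/-- A face of a polytope: a convex extreme subset. -/
def IsFace (P A : Set E) : Prop :=
  IsExtreme ℝ P A ∧ Convex ℝ A

/-- A facet: a face of dimension one less than the polytope. -/
def IsFacet (P A : Set E) : Prop :=
  A.Nonempty ∧ IsFace P A ∧ pdim A + 1 = pdim P

/-- The number of facets. -/
noncomputable def numFacets (P : Set E) : ℕ :=
  {A : Set E | IsFacet P A}.ncard

/-- A `k`-dimensional simplex: convex hull of `k+1` affinely independent points. -/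
def IsSimplex (k : ℕ) (P : Set E) : Prop :=
  ∃ S : Finset E, S.card = k + 1 ∧
    AffineIndependent ℝ (fun x : (S : Set E) => (x : E)) ∧
    P = convexHull ℝ (S : Set E)

/-- A pyramid: convex hull of a polytope together with a point outside its affine hull. -/
def IsPyramid (P : Set E) : Prop :=
  ∃ (Q : Set E) (v : E), IsPolytope Q ∧ v ∉ affineSpan ℝ Q ∧
    P = convexHull ℝ (Q ∪ {v})

/-- The join of two polytopes, realized in skew affine subspaces of `E × F × ℝ`. -/
def polyJoin (P : Set E) (Q : Set F) : Set (E × F × ℝ) :=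
  convexHull ℝ ((fun p => (p, (0 : F), (0 : ℝ))) '' P ∪ (fun q => ((0 : E), q, (1 : ℝ))) '' Q)

/-- Combinatorial equivalence: an inclusion-preserving bijection between the face posets. -/
def CombEquiv (P : Set E) (Q : Set F) : Prop :=
  Nonempty ({A : Set E // IsFace P A} ≃o {B : Set F // IsFace Q B})

end Prelim

open AffineMap

theorem IsExtreme.inter_right {𝕜 E : Type*} [Semiring 𝕜] [PartialOrder 𝕜] [AddCommMonoid E]
    [SMul 𝕜 E] {A B : Set E} (h : IsExtreme 𝕜 A B) (C : Set E) :
    IsExtreme 𝕜 (A ∩ C) (B ∩ C) :=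
  ⟨inter_subset_inter_left C h.subset, fun _ hx₁ _ hx₂ _ hz hz' ↦
    ⟨h.left_mem_of_mem_openSegment hx₁.1 hx₂.1 hz.1 hz', hx₁.2⟩⟩

section Convexity

variable {𝕜 E : Type*} [Field 𝕜] [LinearOrder 𝕜] [IsStrictOrderedRing 𝕜] [AddCommGroup E]
  [Module 𝕜 E]

theorem mem_extremePoints_convexHull_insert {s : Set E} {a : E} (ha : a ∉ convexHull 𝕜 s) :
    a ∈ (convexHull 𝕜 (insert a s)).extremePoints 𝕜 := by
  rcases s.eq_empty_or_nonempty with rfl | hs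
  · simp
  rw [convexHull_insert hs, convexJoin_singleton_left]
  refine ⟨mem_iUnion₂.2 ⟨_, hs.convexHull.some_mem, left_mem_segment 𝕜 _ _⟩, ?_⟩
  intro x₁ hx₁ x₂ hx₂ ⟨α, β, hα, hβ, hαβ, hx⟩
  obtain ⟨c₁, hc₁, α₁, β₁, -, hβ₁, h₁, rfl⟩ := mem_iUnion₂.1 hx₁
  obtain ⟨c₂, hc₂, α₂, β₂, -, hβ₂, h₂, rfl⟩ := mem_iUnion₂.1 hx₂
  rcases hβ₁.eq_or_lt with rfl | hβ₁
  · rw [zero_smul, add_zero, show α₁ = 1 by linarith, one_smul]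
  -- `a` would be a convex combination of `c₁` and `c₂`
  have hD : 0 < α * β₁ + β * β₂ := by positivity
  have key : (α * β₁) • c₁ + (β * β₂) • c₂ = (α * β₁ + β * β₂) • a := by
    linear_combination (norm := module) hx - (α * h₁) • a - (β * h₂) • a - hαβ • a
  refine absurd ?_ ha
  convert convex_iff_div.1 (convex_convexHull 𝕜 s) hc₁ hc₂ (by positivity) (by positivity) hD
    using 1
  rw [← inv_smul_smul₀ hD.ne' a, ← key, smul_add, smul_smul, smul_smul, div_eq_inv_mul,
    div_eq_inv_mul]

theorem convexHull_extremePoints_convexHull_finset (S : Finset E) :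
    convexHull 𝕜 ((convexHull 𝕜 (S : Set E)).extremePoints 𝕜) = convexHull 𝕜 S := by
  classical
  induction S using Finset.strongInduction with
  | H S ih =>
    by_cases hS : ∀ s ∈ S, s ∉ convexHull 𝕜 (↑(S.erase s) : Set E)
    · refine (convexHull_min extremePoints_subset (convex_convexHull 𝕜 _)).antisymm
        (convexHull_mono fun s hs ↦ ?_)
      simpa only [← Finset.coe_insert, Finset.insert_erase hs] using
        mem_extremePoints_convexHull_insert (hS s hs)
    · push Not at hS
      obtain ⟨s, hs, hmem⟩ := hS
      have hS' : convexHull 𝕜 (↑(S.erase s) : Set E) = convexHull 𝕜 ↑S := by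
        refine (convexHull_mono (Finset.coe_subset.2 (S.erase_subset s))).antisymm
          (convexHull_min (fun t ht ↦ ?_) (convex_convexHull 𝕜 _))
        rcases eq_or_ne t s with rfl | hts
        exacts [hmem, subset_convexHull 𝕜 _ (Finset.mem_erase.2 ⟨hts, ht⟩)]
      rw [← hS']
      exact ih _ (Finset.erase_ssubset hs)

end Convexity

theorem LinearMap.map_lineMap {k M N : Type*} [Ring k] [AddCommGroup M] [Module k M]
    [AddCommGroup N] [Module k N] (f : M →ₗ[k] N) (x y : M) (t : k) :
    f (lineMap x y t) = lineMap (f x) (f y) t :=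
  f.toAffineMap.apply_lineMap x y t

section CentralProjection

variable {𝕜 E : Type*} [Field 𝕜] [AddCommGroup E] [Module 𝕜 E]

/-- The point where the line through `v` and `w` meets the hyperplane `f = c` (junk value `v` when
`f w = f v`). -/
noncomputable def centralProjection (f : E →ₗ[𝕜] 𝕜) (c : 𝕜) (v w : E) : E :=
  lineMap v w ((f v - c) / (f v - f w))

variable {f : E →ₗ[𝕜] 𝕜} {c : 𝕜} {v w : E}

theorem map_centralProjection (h : f w ≠ f v) : f (centralProjection f c v w) = c := by
  rw [centralProjection, f.map_lineMap, lineMap_apply_ring']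
  field_simp [sub_ne_zero.2 h.symm]
  ring

theorem lineMap_centralProjection (hw : f w ≠ f v) (hc : f v ≠ c) :
    lineMap v (centralProjection f c v w) ((f v - f w) / (f v - c)) = w := by
  rw [centralProjection, lineMap_lineMap_right, div_mul_div_cancel₀ (sub_ne_zero.2 hc),
    div_self (sub_ne_zero.2 hw.symm), lineMap_apply_one]

theorem centralProjection_mem_iff {A : AffineSubspace 𝕜 E} (hv : v ∈ A) (hw : f w ≠ f v)
    (hc : f v ≠ c) : centralProjection f c v w ∈ A ↔ w ∈ A := by
  refine ⟨fun h ↦ ?_, fun h ↦ lineMap_mem _ hv h⟩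
  rw [← lineMap_centralProjection hw hc]
  exact lineMap_mem _ hv h

variable [LinearOrder 𝕜] [IsStrictOrderedRing 𝕜]

theorem segment_inter_hyperplane (hw : f w ≤ c) (hc : c < f v) :
    segment 𝕜 v w ∩ {x | f x = c} = {centralProjection f c v w} := by
  have hd : f v - f w ≠ 0 := by linarith
  refine Subset.antisymm ?_ (singleton_subset_iff.2 ⟨?_, map_centralProjection (by linarith)⟩)
  · rintro _ ⟨hx, hfx⟩
    obtain ⟨t, -, rfl⟩ := (segment_eq_image_lineMap 𝕜 v w).subset hx
    rw [mem_ofPred_eq, f.map_lineMap, lineMap_apply_ring'] at hfx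
    rw [mem_singleton_iff, centralProjection, ← hfx]
    congr 1
    field_simp
    ring
  · rw [segment_eq_image_lineMap]
    exact mem_image_of_mem _ ⟨div_nonneg (by linarith) (by linarith),
      div_le_one_of_le₀ (by linarith) (by linarith)⟩

theorem centralProjection_smul_add_smul_mem_segment {z₁ z₂ : E} (hz₁ : f z₁ < f v)
    (hz₂ : f z₂ < f v) {a b : 𝕜} (ha : 0 ≤ a) (hb : 0 ≤ b) (hab : a + b = 1) :
    centralProjection f c v (a • z₁ + b • z₂) ∈
      segment 𝕜 (centralProjection f c v z₁) (centralProjection f c v z₂) := by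
  have hd₁ : 0 < f v - f z₁ := by linarith
  have hd₂ : 0 < f v - f z₂ := by linarith
  have hd : 0 < a * (f v - f z₁) + b * (f v - f z₂) := by
    rcases ha.eq_or_lt with rfl | ha
    · rw [zero_add] at hab; subst hab; simpa
    · positivity
  have hfz : f v - f (a • z₁ + b • z₂) = a * (f v - f z₁) + b * (f v - f z₂) := by
    simp only [map_add, map_smul, smul_eq_mul]; linear_combination -(f v) * hab
  refine ⟨a * (f v - f z₁) / (a * (f v - f z₁) + b * (f v - f z₂)),
    b * (f v - f z₂) / (a * (f v - f z₁) + b * (f v - f z₂)), by positivity, by positivity,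
    by field_simp, ?_⟩
  simp only [centralProjection, lineMap_apply_module', hfz]
  match_scalars <;> field_simp
  linear_combination (c - f v) * hab

theorem centralProjection_mem_convexHull_image {W : Set E} (hW : ∀ w ∈ W, f w < f v) {z : E}
    (hz : z ∈ convexHull 𝕜 W) :
    centralProjection f c v z ∈ convexHull 𝕜 (centralProjection f c v '' W) := by
  suffices h : convexHull 𝕜 W ⊆
      {z | f z < f v ∧ centralProjection f c v z ∈ convexHull 𝕜 (centralProjection f c v '' W)} from
    (h hz).2
  refine convexHull_min (fun w hw ↦ ⟨hW w hw, subset_convexHull 𝕜 _ (mem_image_of_mem _ hw)⟩) ?_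
  rintro z₁ ⟨hz₁, hp₁⟩ z₂ ⟨hz₂, hp₂⟩ a b ha hb hab
  exact ⟨convex_halfSpace_lt f.isLinear (f v) hz₁ hz₂ ha hb hab,
    (convex_convexHull 𝕜 _).segment_subset hp₁ hp₂
      (centralProjection_smul_add_smul_mem_segment hz₁ hz₂ ha hb hab)⟩

theorem convexHull_insert_inter_hyperplane {W : Set E} (hW : ∀ w ∈ W, f w ≤ c) (hc : c < f v) :
    convexHull 𝕜 (insert v W) ∩ {x | f x = c} =
      convexHull 𝕜 (centralProjection f c v '' W) := by
  rcases W.eq_empty_or_nonempty with rfl | hne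
  · simpa using fun h : f v = c ↦ hc.ne' h
  refine Subset.antisymm ?_ (convexHull_min ?_
    ((convex_convexHull 𝕜 _).inter (convex_hyperplane f.isLinear c)))
  · rintro x ⟨hx, hfx⟩
    rw [convexHull_insert hne, convexJoin_singleton_left] at hx
    obtain ⟨z, hz, hxz⟩ := mem_iUnion₂.1 hx
    have hfz : f z ≤ c := convexHull_min hW (convex_halfSpace_le f.isLinear c) hz
    rw [(segment_inter_hyperplane hfz hc).subset ⟨hxz, hfx⟩]
    exact centralProjection_mem_convexHull_image (fun w hw ↦ (hW w hw).trans_lt hc) hz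
  · rintro _ ⟨w, hw, rfl⟩
    obtain ⟨hseg, hfw⟩ := (segment_inter_hyperplane (hW w hw) hc).symm.subset (mem_singleton _)
    exact ⟨segment_subset_convexHull (mem_insert _ _) (mem_insert_of_mem _ hw) hseg, hfw⟩

theorem centralProjection_mem_extremePoints {P : Set E} (hP : IsExtreme 𝕜 P (segment 𝕜 v w))
    (hw : f w ≤ c) (hc : c < f v) :
    centralProjection f c v w ∈ (P ∩ {x | f x = c}).extremePoints 𝕜 := by
  rw [← isExtreme_singleton, ← segment_inter_hyperplane hw hc]
  exact hP.inter_right _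

theorem injOn_centralProjection {P : Set E} (hv : v ∈ P) (hc : c < f v) :
    InjOn (centralProjection f c v) (P.extremePoints 𝕜 ∩ {w | f w < f v}) := by
  rintro w ⟨hwP, hw⟩ w' ⟨hwP', hw'⟩ heq
  wlog hle : (f v - f w) / (f v - c) ≤ (f v - f w') / (f v - c) generalizing w w'
  · exact (this hwP' hw' hwP hw heq.symm (le_of_not_ge hle)).symm
  -- `w` and `w'` lie on the same ray from `v`, so the nearer one is between `v` and the other
  have hbtw : Wbtw 𝕜 v (lineMap v (centralProjection f c v w) ((f v - f w) / (f v - c)))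
      (lineMap v (centralProjection f c v w) ((f v - f w') / (f v - c))) := by
    simp only [lineMap_apply]
    exact wbtw_smul_vadd_smul_vadd_of_nonneg_of_le _ _
      (div_nonneg (sub_nonneg.2 (le_of_lt hw)) (sub_nonneg.2 hc.le)) hle
  rw [lineMap_centralProjection (ne_of_lt hw) hc.ne', heq,
    lineMap_centralProjection (ne_of_lt hw') hc.ne'] at hbtw
  rcases (mem_extremePoints_iff_forall_segment.1 hwP).2 v hv w' hwP'.1 hbtw.mem_segment with h | h
  · exact absurd hw (h ▸ lt_irrefl _)
  · exact h.symm

theorem mem_affineSpan_of_mem_affineSpan_insert {Q : Set E} (hQ : ∀ q ∈ Q, f q = c)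
    (hv : f v ≠ c) {x : E} (hx : x ∈ affineSpan 𝕜 (insert v Q)) (hfx : f x = c) :
    x ∈ affineSpan 𝕜 Q := by
  rcases Q.eq_empty_or_nonempty with rfl | ⟨q, hq⟩
  · rw [insert_empty_eq, AffineSubspace.mem_affineSpan_singleton] at hx
    exact absurd (hx ▸ hfx) hv
  have hspan : affineSpan 𝕜 Q ≤ (affineSpan 𝕜 {c}).comap f.toAffineMap :=
    affineSpan_le.2 fun q hq ↦ by simp [hQ q hq]
  have hc : ∀ y ∈ affineSpan 𝕜 Q, f y = c := fun y hy ↦ by simpa using hspan hy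
  rw [← affineSpan_insert_affineSpan,
    AffineSubspace.mem_affineSpan_insert_iff (subset_affineSpan 𝕜 Q hq)] at hx
  obtain ⟨r, p, hp, rfl⟩ := hx
  simp only [vsub_eq_sub, vadd_eq_add, map_add, map_smul, map_sub, smul_eq_mul, hc p hp,
    hQ q hq] at hfx
  obtain rfl : r = 0 := by simpa [sub_ne_zero.2 hv] using hfx
  simpa using hp

theorem exists_centralProjection_eq_apex {X Q : Set E} {a : E} (hv : v ∈ X)
    (hX : X ⊆ (convexHull 𝕜 X).extremePoints 𝕜)
    (hadj : ∀ w ∈ X \ {v}, IsExtreme 𝕜 (convexHull 𝕜 X) (segment 𝕜 v w))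
    (hsep : ∀ w ∈ X \ {v}, f w < c) (hc : c < f v)
    (hfig : convexHull 𝕜 X ∩ {x | f x = c} = convexHull 𝕜 (insert a Q))
    (ha : a ∉ convexHull 𝕜 Q) :
    ∃ w₀ ∈ X \ {v}, centralProjection f c v w₀ = a ∧
      ∀ w ∈ X \ {v}, w ≠ w₀ → centralProjection f c v w ∈ Q := by
  have hslice : convexHull 𝕜 X ∩ {x | f x = c} =
      convexHull 𝕜 (centralProjection f c v '' (X \ {v})) := by
    conv_lhs => rw [← insert_eq_of_mem hv, ← insert_sdiff_singleton]
    exact convexHull_insert_inter_hyperplane (fun w hw ↦ (hsep w hw).le) hc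
  rw [hslice] at hfig
  have hext : ∀ w ∈ X \ {v}, centralProjection f c v w ∈
      (convexHull 𝕜 (insert a Q)).extremePoints 𝕜 := fun w hw ↦
    hfig ▸ hslice ▸ centralProjection_mem_extremePoints (hadj w hw) (hsep w hw).le hc
  have hinj : InjOn (centralProjection f c v) (X \ {v}) :=
    (injOn_centralProjection (subset_convexHull 𝕜 X hv) hc).mono
      fun w hw ↦ (⟨hX hw.1, (hsep w hw).trans hc⟩ : w ∈ _ ∩ {w | f w < f v})
  obtain ⟨w₀, hw₀, rfl⟩ :=
    extremePoints_convexHull_subset (hfig ▸ mem_extremePoints_convexHull_insert ha)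
  exact ⟨w₀, hw₀, rfl, fun w hw hww₀ ↦ (extremePoints_convexHull_subset (hext w hw)).resolve_left
    fun h ↦ hww₀ (hinj hw hw₀ h)⟩

theorem notMem_affineSpan_sdiff_of_centralProjection {X Q : Set E} (hQ : ∀ q ∈ Q, f q = c)
    (hc : f v ≠ c) (hX : ∀ w ∈ X \ {v}, f w ≠ f v) {w₀ : E} (hw₀ : w₀ ∈ X \ {v})
    (hXQ : ∀ w ∈ X \ {v}, w ≠ w₀ → centralProjection f c v w ∈ Q)
    (hQw₀ : centralProjection f c v w₀ ∉ affineSpan 𝕜 Q) : w₀ ∉ affineSpan 𝕜 (X \ {w₀}) := by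
  have hvA : v ∈ affineSpan 𝕜 (insert v Q) := subset_affineSpan 𝕜 _ (mem_insert v Q)
  have hXA : X \ {w₀} ⊆ affineSpan 𝕜 (insert v Q) := by
    rintro w ⟨hwX, hww₀⟩
    rcases eq_or_ne w v with rfl | hwv
    · exact hvA
    exact (centralProjection_mem_iff hvA (hX w ⟨hwX, hwv⟩) hc).1
      (subset_affineSpan 𝕜 _ (mem_insert_of_mem v (hXQ w ⟨hwX, hwv⟩ hww₀)))
  refine fun h ↦ hQw₀ (mem_affineSpan_of_mem_affineSpan_insert hQ hc ?_
    (map_centralProjection (hX w₀ hw₀)))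
  exact (centralProjection_mem_iff hvA (hX w₀ hw₀) hc).2 (affineSpan_le.2 hXA h)

end CentralProjection

theorem isPyramid_convexHull_of_notMem_affineSpan {E : Type*} [AddCommGroup E] [Module ℝ E]
    {X : Set E} (hX : X.Finite) {w : E} (hw : w ∈ X) (hne : (X \ {w}).Nonempty)
    (hspan : w ∉ affineSpan ℝ (X \ {w})) : IsPyramid (convexHull ℝ X) := by
  refine ⟨convexHull ℝ (X \ {w}), w, ⟨hX.sdiff.toFinset, by simpa, by simp⟩,
    by rwa [affineSpan_convexHull], ?_⟩
  rw [convexHull_convexHull_union_left, sdiff_union_self,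
    union_eq_self_of_subset_right (singleton_subset_iff.2 hw)]

/-- If a vertex v of a polytope P is joined by an edge to every other vertex
and a vertex figure P/v (a slice by a hyperplane strictly separating v from the other
vertices) is a pyramid, then P is a pyramid. -/
theorem stmt7 {E : Type*} [AddCommGroup E] [Module ℝ E]
    (P : Set E) (hP : IsPolytope P)
    (v : E) (hv : v ∈ P.extremePoints ℝ)
    (hadj : ∀ w ∈ P.extremePoints ℝ, w ≠ v → IsFace P (segment ℝ v w))
    (f : E →ₗ[ℝ] ℝ) (c : ℝ) (hfv : c < f v)
    (hsep : ∀ w ∈ P.extremePoints ℝ, w ≠ v → f w < c)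
    (hfig : IsPyramid (P ∩ {x | f x = c})) :
    IsPyramid P := by
  obtain ⟨S, -, rfl⟩ := hP
  set X := (convexHull ℝ (S : Set E)).extremePoints ℝ
  have hXS : convexHull ℝ X = convexHull ℝ S := convexHull_extremePoints_convexHull_finset S
  obtain ⟨Q, a, ⟨T, -, hQT⟩, haQ, hfig⟩ := hfig
  have hQc : ∀ q ∈ Q, f q = c := fun q hq ↦
    (hfig.symm.subset (subset_convexHull ℝ _ (mem_union_left _ hq))).2
  have hQ : Convex ℝ Q := hQT ▸ convex_convexHull ℝ _
  obtain ⟨w₀, hw₀, rfl, hXQ⟩ := exists_centralProjection_eq_apex hv (hXS ▸ subset_rfl)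
    (fun w hw ↦ hXS ▸ (hadj w hw.1 hw.2).1) (fun w hw ↦ hsep w hw.1 hw.2) hfv
    (by rw [hXS, hfig, union_singleton])
    (fun h ↦ haQ (subset_affineSpan ℝ _ (hQ.convexHull_eq ▸ h)))
  rw [← hXS]
  exact isPyramid_convexHull_of_notMem_affineSpan
    (S.finite_toSet.subset extremePoints_convexHull_subset) hw₀.1
    ⟨v, hv, fun h ↦ hw₀.2 (mem_singleton_iff.1 h).symm⟩
    (notMem_affineSpan_sdiff_of_centralProjection hQc hfv.ne'
      (fun w hw ↦ (hsep w hw.1 hw.2).trans hfv |>.ne) hw₀ hXQ haQ)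
end

section
/- A d-polytope P is a pyramid with apex v if and only if exactly one facet of P does not contain the vertex v. -/
open Set

/-- A pyramid with apex `v`: the convex hull of a polytope of one lower dimension
together with `v` outside its affine hull. -/
def IsPyramidWithApex {E : Type*} [AddCommGroup E] [Module ℝ E] (P : Set E) (v : E) : Prop :=
  ∃ Q : Set E, IsPolytope Q ∧ pdim Q + 1 = pdim P ∧ v ∉ affineSpan ℝ Q ∧
    P = convexHull ℝ (Q ∪ {v})

/-!
If `P = conv (Q ∪ {v})` with `v ∉ aff Q`, an affine function vanishing on `Q` and equal to `1`
at `v` exposes `Q` as a face of `P`, hence as a facet. A face missing `v` lies in `Q`, because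
every point of `P` is on a segment from `v` to `Q`, and a face of `Q` of the same dimension as `Q`
is `Q` itself.

Conversely, let `T` be a minimal finite set with `conv T = P`; it contains the vertex `v`. For
`u ∈ T` other than `v`, a linear functional separating `u` from the rest of `T` exposes a face
containing `u` but not `v`. Tilting the functional about the current face while keeping `v` off
it raises the dimension of the face until it is a facet. So if only one facet misses `v`, that
facet contains `T \ {v}`, and `P` is the pyramid over it with apex `v`.
-/

section

variable {E : Type*} [AddCommGroup E] [Module ℝ E]

lemma pdim_convexHull (s : Set E) : pdim (convexHull ℝ s) = pdim s := by
  rw [pdim, affineSpan_convexHull, pdim]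

lemma pdim_le_of_subset_affineSpan {s t : Set E} (h : s ⊆ affineSpan ℝ t)
    [FiniteDimensional ℝ (affineSpan ℝ t).direction] : pdim s ≤ pdim t :=
  Submodule.finrank_mono (AffineSubspace.direction_le (affineSpan_le.2 h))

lemma pdim_insert_le (x : E) (s : Set E) : pdim (insert x s) ≤ pdim s + 1 := by
  rw [pdim, pdim, direction_affineSpan, direction_affineSpan]
  exact finrank_vectorSpan_insert_le_set ℝ s x

lemma finiteDimensional_direction_of_subset_convexHull {s : Set E} {T : Finset E}
    (h : s ⊆ convexHull ℝ (T : Set E)) : FiniteDimensional ℝ (affineSpan ℝ s).direction :=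
  have := finiteDimensional_direction_affineSpan_of_finite ℝ T.finite_toSet
  Submodule.finiteDimensional_of_le <| AffineSubspace.direction_le <|
    (affineSpan_mono ℝ h).trans (affineSpan_convexHull (𝕜 := ℝ) (T : Set E)).le

lemma exists_affineMap_eq_zero_of_notMem_affineSpan {s : Set E} (hs : s.Nonempty) {x : E}
    (hx : x ∉ affineSpan ℝ s) : ∃ h : E →ᵃ[ℝ] ℝ, (∀ y ∈ s, h y = 0) ∧ h x = 1 := by
  obtain ⟨p, hp⟩ := hs
  have hp' := subset_affineSpan ℝ s hp
  have hxp : x - p ∉ (affineSpan ℝ s).direction := fun h ↦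
    hx (by simpa using AffineSubspace.vadd_mem_of_mem_direction h hp')
  obtain ⟨f, hf0, hf1⟩ := LinearMap.exists_extend_of_notMem 0 hxp (1 : ℝ)
  refine ⟨f.toAffineMap - AffineMap.const ℝ E (f p), fun y hy ↦ ?_, ?_⟩
  · have := congr($hf0 ⟨y - p, AffineSubspace.vsub_mem_direction (subset_affineSpan ℝ s hy) hp'⟩)
    simpa [sub_eq_zero] using this
  · simpa using hf1

def exposedFace (C : Set E) (g : E →ᵃ[ℝ] ℝ) : Set E :=
  {x ∈ C | ∀ y ∈ C, g y ≤ g x}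

lemma isExtreme_exposedFace (C : Set E) (g : E →ᵃ[ℝ] ℝ) : IsExtreme ℝ C (exposedFace C g) := by
  refine ⟨fun x hx ↦ hx.1, ?_⟩
  rintro x₁ hx₁ x₂ hx₂ x ⟨-, hxmax⟩ ⟨a, b, ha, hb, hab, rfl⟩
  have hcomb : g (a • x₁ + b • x₂) = a * g x₁ + b * g x₂ := by
    simpa using Convex.combo_affine_apply (f := g) hab
  refine ⟨hx₁, fun y hy ↦ (hxmax y hy).trans (not_lt.1 fun hlt ↦ ?_)⟩
  have h₁ := mul_lt_mul_of_pos_left hlt ha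
  have h₂ := mul_le_mul_of_nonneg_left (hxmax x₂ hx₂) hb.le
  have : a * g (a • x₁ + b • x₂) + b * g (a • x₁ + b • x₂) = g (a • x₁ + b • x₂) := by
    rw [← add_mul, hab, one_mul]
  linarith

lemma convex_exposedFace {C : Set E} (hC : Convex ℝ C) (g : E →ᵃ[ℝ] ℝ) :
    Convex ℝ (exposedFace C g) := by
  have : exposedFace C g = C ∩ ⋂ y ∈ C, {x | g y ≤ g x} := by
    ext x; simp [exposedFace]
  rw [this]
  exact hC.inter (convex_iInter₂ fun y _ ↦ (convex_Ici (g y)).affine_preimage g)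

lemma apply_le_of_mem_convexHull {g : E →ᵃ[ℝ] ℝ} {s : Set E} {M : ℝ} (hs : ∀ y ∈ s, g y ≤ M)
    {x : E} (hx : x ∈ convexHull ℝ s) : g x ≤ M :=
  convexHull_min hs ((convex_Iic M).affine_preimage g) hx

lemma mem_exposedFace_convexHull_iff {g : E →ᵃ[ℝ] ℝ} {s : Set E} {x : E} :
    x ∈ exposedFace (convexHull ℝ s) g ↔ x ∈ convexHull ℝ s ∧ ∀ y ∈ s, g y ≤ g x :=
  and_congr_right fun _ ↦ ⟨fun h y hy ↦ h y (subset_convexHull ℝ s hy),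
    fun h _ hy ↦ apply_le_of_mem_convexHull h hy⟩

lemma IsExtreme.eq_convexHull_inter {s A : Set E} (hA : IsExtreme ℝ (convexHull ℝ s) A)
    (hAc : Convex ℝ A) : A = convexHull ℝ (s ∩ A) := by
  refine Subset.antisymm (fun x hx ↦ ?_) (convexHull_min inter_subset_right hAc)
  have hout : convexHull ℝ (s \ A) ⊆ convexHull ℝ s \ A :=
    convexHull_min (fun y hy ↦ ⟨subset_convexHull ℝ s hy.1, hy.2⟩)
      (hA.convex_sdiff (convex_convexHull ℝ s))
  have hxs := hA.subset hx
  rcases (s \ A).eq_empty_or_nonempty with hsA | hsA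
  · rwa [inter_eq_left.2 (sdiff_eq_empty.1 hsA)]
  rcases (s ∩ A).eq_empty_or_nonempty with hsA' | hsA'
  · rw [← sdiff_self_inter, hsA', sdiff_empty] at hout
    exact absurd hx (hout hxs).2
  rw [← inter_union_sdiff s A, convexHull_union hsA' hsA, mem_convexJoin] at hxs
  obtain ⟨a, ha, b, hb, hxab⟩ := hxs
  rw [← insert_endpoints_openSegment] at hxab
  rcases hxab with rfl | rfl | hxab
  · exact ha
  · exact absurd hx (hout hb).2
  · exact absurd (hA.right_mem_of_mem_openSegment (convexHull_mono inter_subset_left ha)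
      (hout hb).1 hx hxab) (hout hb).2

lemma IsExtreme.exists_finset_eq_convexHull {S : Finset E} {A : Set E}
    (hA : IsExtreme ℝ (convexHull ℝ (S : Set E)) A) (hAc : Convex ℝ A) :
    ∃ T : Finset E, A = convexHull ℝ (T : Set E) := by
  classical
  exact ⟨S.filter (· ∈ A), by rw [Finset.coe_filter]; exact hA.eq_convexHull_inter hAc⟩

lemma Finset.exists_centroid_mem_openSegment {s : Finset E} {μ : E → ℝ}
    (hμ : ∑ i ∈ s, μ i = 1) :
    ∃ z ∈ convexHull ℝ (s : Set E), s.centroid ℝ id ∈ openSegment ℝ z (∑ i ∈ s, μ i • i) := by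
  have hs : s.Nonempty := Finset.nonempty_of_sum_ne_zero (by rw [hμ]; exact one_ne_zero)
  set n : ℝ := (s.card : ℝ)
  set K : ℝ := 2 + ∑ i ∈ s, |μ i|
  have hn : 1 ≤ n := Nat.one_le_cast.2 hs.card_pos
  have hK : ∀ i ∈ s, μ i ≤ K := fun i hi ↦ by
    have := Finset.single_le_sum (fun j _ ↦ abs_nonneg (μ j)) hi
    linarith [le_abs_self (μ i)]
  have hnK : 1 < n * K := by
    have : 2 ≤ K := le_add_of_nonneg_right (Finset.sum_nonneg fun j _ ↦ abs_nonneg (μ j))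
    nlinarith
  -- `z = (n K c - x) / (n K - 1)` for the centroid `c`; its weights are nonnegative as `μ i ≤ K`
  refine ⟨∑ i ∈ s, ((K - μ i) / (n * K - 1)) • i, ?_, 1 - 1 / (n * K), 1 / (n * K), ?_,
    by positivity, by ring, ?_⟩
  · refine (convex_convexHull ℝ _).sum_mem (fun i hi ↦ div_nonneg (by linarith [hK i hi])
      (by linarith)) ?_ fun i hi ↦ subset_convexHull ℝ _ hi
    rw [← Finset.sum_div, Finset.sum_sub_distrib, hμ, Finset.sum_const, nsmul_eq_mul]
    exact div_self (by linarith)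
  · rw [sub_pos, div_lt_one (by linarith)]
    exact hnK
  · rw [Finset.centroid_def, s.affineCombination_eq_linear_combination _ _
      (s.sum_centroidWeights_eq_one_of_nonempty ℝ hs)]
    simp only [Finset.smul_sum, smul_smul, ← Finset.sum_add_distrib, ← add_smul,
      Finset.centroidWeights_apply, id]
    refine Finset.sum_congr rfl fun i _ ↦ congrArg (· • i) ?_
    have : n * K - 1 ≠ 0 := by linarith
    have : K ≠ 0 := by nlinarith
    have : n ≠ 0 := by linarith
    field_simp
    ring

lemma IsExtreme.mem_of_mem_affineSpan {C : Set E} {T : Finset E}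
    (hT : IsExtreme ℝ C (convexHull ℝ (T : Set E))) {x : E} (hxC : x ∈ C)
    (hx : x ∈ affineSpan ℝ (T : Set E)) : x ∈ convexHull ℝ (T : Set E) := by
  obtain ⟨s, μ, hsT, hμ, rfl⟩ :=
    eq_affineCombination_of_mem_affineSpan_image (p := id) (by simpa using hx)
  rw [s.affineCombination_eq_linear_combination _ _ hμ] at hxC ⊢
  have hs : s.Nonempty := Finset.nonempty_of_sum_ne_zero (by rw [hμ]; exact one_ne_zero)
  obtain ⟨z, hz, hseg⟩ := Finset.exists_centroid_mem_openSegment hμ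
  exact hT.right_mem_of_mem_openSegment (hT.subset (convexHull_mono hsT hz)) hxC
    (convexHull_mono hsT (s.centroid_mem_convexHull hs)) hseg

lemma IsExtreme.eq_of_pdim_le {S : Finset E} {A : Set E}
    (hA : IsExtreme ℝ (convexHull ℝ (S : Set E)) A) (hAc : Convex ℝ A) (hAne : A.Nonempty)
    (hdim : pdim (convexHull ℝ (S : Set E)) ≤ pdim A) : A = convexHull ℝ (S : Set E) := by
  obtain ⟨T, rfl⟩ := hA.exists_finset_eq_convexHull hAc
  have := finiteDimensional_direction_of_subset_convexHull (subset_refl (convexHull ℝ (S : Set E)))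
  have hle := affineSpan_mono ℝ hA.subset
  have hspan := AffineSubspace.eq_of_direction_eq_of_nonempty_of_le
    (Submodule.eq_of_le_of_finrank_le (AffineSubspace.direction_le hle) hdim)
    (hAne.mono (subset_affineSpan ℝ _)) hle
  refine hA.subset.antisymm fun x hx ↦ hA.mem_of_mem_affineSpan hx ?_
  rw [← affineSpan_convexHull, hspan]
  exact subset_affineSpan ℝ _ hx

lemma IsExtreme.pdim_lt {S : Finset E} {A : Set E}
    (hA : IsExtreme ℝ (convexHull ℝ (S : Set E)) A) (hAc : Convex ℝ A) (hAne : A.Nonempty)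
    (hne : A ≠ convexHull ℝ (S : Set E)) : pdim A < pdim (convexHull ℝ (S : Set E)) :=
  lt_of_not_ge fun h ↦ hne (hA.eq_of_pdim_le hAc hAne h)

section Pyramid

variable {Q : Set E} {v : E}

lemma mem_convexHull_insert_iff (hQ : Convex ℝ Q) (hQne : Q.Nonempty) {x : E} :
    x ∈ convexHull ℝ (insert v Q) ↔ ∃ z ∈ Q, x ∈ segment ℝ v z := by
  rw [convexHull_insert hQne, hQ.convexHull_eq, convexJoin_singleton_left, mem_iUnion₂]
  simp only [exists_prop]

lemma exposedFace_convexHull_insert (hQ : Convex ℝ Q) (hQne : Q.Nonempty) {h : E →ᵃ[ℝ] ℝ}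
    (hQ0 : ∀ y ∈ Q, h y = 0) (hv : h v = 1) :
    exposedFace (convexHull ℝ (insert v Q)) (-h) = Q := by
  have hsub : Q ⊆ convexHull ℝ (insert v Q) :=
    (subset_insert v Q).trans (subset_convexHull ℝ _)
  have hnonneg : ∀ x ∈ convexHull ℝ (insert v Q), 0 ≤ h x := fun x hx ↦ by
    have := apply_le_of_mem_convexHull (g := -h) (M := 0) (by
      rintro y (rfl | hy)
      · simp [hv]
      · simp [hQ0 y hy]) hx
    simpa using this
  refine Subset.antisymm (fun x ⟨hx, hxmax⟩ ↦ ?_) fun q hq ↦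
    ⟨hsub hq, fun y hy ↦ by simpa [hQ0 q hq] using hnonneg y hy⟩
  obtain ⟨z, hz, hxz⟩ := (mem_convexHull_insert_iff hQ hQne).1 hx
  rw [segment_eq_image_lineMap] at hxz
  obtain ⟨t, ht, rfl⟩ := hxz
  obtain ⟨q, hq⟩ := hQne
  have := hxmax q (hsub hq)
  rw [AffineMap.coe_neg, Pi.neg_apply, Pi.neg_apply, hQ0 q hq, AffineMap.apply_lineMap, hv,
    hQ0 z hz, AffineMap.lineMap_apply_ring] at this
  obtain rfl : t = 1 := by linarith [ht.2]
  rwa [AffineMap.lineMap_apply_one]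

lemma IsExtreme.subset_of_notMem (hQ : Convex ℝ Q) (hQne : Q.Nonempty) {A : Set E}
    (hA : IsExtreme ℝ (convexHull ℝ (insert v Q)) A) (hvA : v ∉ A) : A ⊆ Q := by
  intro x hx
  obtain ⟨z, hz, hxz⟩ := (mem_convexHull_insert_iff hQ hQne).1 (hA.subset hx)
  rw [← insert_endpoints_openSegment] at hxz
  rcases hxz with rfl | rfl | hxz
  · exact absurd hx hvA
  · exact hz
  · exact absurd (hA.left_mem_of_mem_openSegment (subset_convexHull ℝ _ (mem_insert v Q))
      ((subset_insert v Q).trans (subset_convexHull ℝ _) hz) hx hxz) hvA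

end Pyramid

theorem IsPyramidWithApex.ncard_setOf_isFacet_notMem_eq_one {P : Set E} {v : E}
    (hP : IsPyramidWithApex P v) :
    {A : Set E | IsFacet P A ∧ v ∉ A}.ncard = 1 := by
  obtain ⟨_, ⟨S, hSne, rfl⟩, hdim, hvQ, rfl⟩ := hP
  set Q := convexHull ℝ (S : Set E)
  have hQc : Convex ℝ Q := convex_convexHull ℝ _
  have hQne : Q.Nonempty := (Finset.coe_nonempty.2 hSne).convexHull
  obtain ⟨h, hQ0, hv⟩ := exists_affineMap_eq_zero_of_notMem_affineSpan hQne hvQ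
  rw [union_singleton] at hdim ⊢
  have hQext : IsExtreme ℝ (convexHull ℝ (insert v Q)) Q :=
    (exposedFace_convexHull_insert hQc hQne hQ0 hv).subst (isExtreme_exposedFace _ (-h))
  refine ncard_eq_one.2 ⟨Q, eq_singleton_iff_unique_mem.2
    ⟨⟨⟨hQne, ⟨hQext, hQc⟩, hdim⟩, fun hvQ' ↦ hvQ (subset_affineSpan ℝ Q hvQ')⟩, ?_⟩⟩
  rintro A ⟨⟨hAne, ⟨hAext, hAc⟩, hAdim⟩, hvA⟩
  exact (hAext.mono hQext.subset (hAext.subset_of_notMem hQc hQne hvA)).eq_of_pdim_le hAc hAne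
    (show pdim Q ≤ pdim A by omega)

lemma exists_linearMap_lt_of_notMem_convexHull {s : Set E} (hs : s.Finite) {u : E}
    (hu : u ∉ convexHull ℝ s) : ∃ ℓ : E →ₗ[ℝ] ℝ, ∀ x ∈ s, ℓ x < ℓ u := by
  -- transport to coordinates on the finite-dimensional span of `insert u s`,
  -- where Hahn–Banach applies
  set W := Submodule.span ℝ (insert u s)
  have : FiniteDimensional ℝ W := FiniteDimensional.span_of_finite ℝ (hs.insert u)
  set e := (Module.finBasis ℝ W).equivFun
  obtain ⟨G, hG⟩ := LinearMap.exists_extend e.toLinearMap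
  set ψ := W.subtype ∘ₗ e.symm.toLinearMap
  have hψG : ∀ y ∈ insert u s, ψ (G y) = y := fun y hy ↦ by
    have hy' : y ∈ W := Submodule.subset_span hy
    have : G y = e ⟨y, hy'⟩ := congr($hG ⟨y, hy'⟩)
    simp [ψ, this]
  have hGu : G u ∉ convexHull ℝ (G '' s) := fun hmem ↦ hu <| by
    have := mem_image_of_mem ψ hmem
    rwa [LinearMap.image_convexHull, image_image,
      image_congr fun y hy ↦ hψG y (mem_insert_of_mem u hy), image_id',
      hψG u (mem_insert u s)] at this
  obtain ⟨f, c, hfc, hcu⟩ := geometric_hahn_banach_closed_point (convex_convexHull ℝ _)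
    ((hs.image G).isCompact_convexHull (𝕜 := ℝ)).isClosed hGu
  exact ⟨f.toLinearMap ∘ₗ G, fun x hx ↦
    (hfc _ (subset_convexHull ℝ _ (mem_image_of_mem G hx))).trans hcu⟩

lemma exists_finset_convexHull_eq_notMem_convexHull_sdiff (S : Finset E) :
    ∃ T : Finset E, convexHull ℝ (T : Set E) = convexHull ℝ (S : Set E) ∧
      ∀ t ∈ T, t ∉ convexHull ℝ ((T : Set E) \ {t}) := by
  classical
  obtain ⟨T, hT, hmin⟩ :=
    (S.powerset.filter fun T : Finset E ↦ convexHull ℝ (T : Set E) = convexHull ℝ S)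
      |>.exists_min_image Finset.card ⟨S, by simp⟩
  rw [Finset.mem_filter, Finset.mem_powerset] at hT
  refine ⟨T, hT.2, fun t ht hmem ↦ ?_⟩
  have herase : convexHull ℝ (T.erase t : Set E) = convexHull ℝ S := by
    rw [← hT.2, Finset.coe_erase]
    refine (convexHull_mono sdiff_subset).antisymm
      (convexHull_min (fun y hy ↦ ?_) (convex_convexHull ℝ _))
    by_cases hyt : y = t
    · exact hyt ▸ hmem
    · exact subset_convexHull ℝ _ ⟨hy, hyt⟩
  exact (Finset.card_erase_lt_of_mem ht).not_ge <| hmin _ <| Finset.mem_filter.2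
    ⟨Finset.mem_powerset.2 ((T.erase_subset t).trans hT.1), herase⟩

section Facets

variable {T : Finset E}

lemma exists_exposedFace_ssuperset {g : E →ᵃ[ℝ] ℝ} {v s : E}
    (hne : (exposedFace (convexHull ℝ (T : Set E)) g).Nonempty)
    (hvA : v ∉ exposedFace (convexHull ℝ (T : Set E)) g) (hs : s ∈ T)
    (hsA : s ∉ affineSpan ℝ (insert v (exposedFace (convexHull ℝ (T : Set E)) g))) :
    ∃ g' : E →ᵃ[ℝ] ℝ,
      exposedFace (convexHull ℝ (T : Set E)) g ⊂ exposedFace (convexHull ℝ (T : Set E)) g' ∧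
        v ∉ exposedFace (convexHull ℝ (T : Set E)) g' := by
  classical
  set A := exposedFace (convexHull ℝ (T : Set E)) g
  obtain ⟨u, hu⟩ := hne
  obtain ⟨h, h0, hs1⟩ := exists_affineMap_eq_zero_of_notMem_affineSpan (insert_nonempty v A) hsA
  have hA0 : ∀ x ∈ A, h x = 0 := fun x hx ↦ h0 x (mem_insert_of_mem v hx)
  have hlt : ∀ t ∈ T, 0 < h t → g t < g u := fun t ht hpos ↦
    (hu.2 t (subset_convexHull ℝ _ ht)).lt_of_ne fun heq ↦ hpos.ne' <|
      hA0 t ⟨subset_convexHull ℝ _ ht, fun y hy ↦ heq ▸ hu.2 y hy⟩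
  -- tilt `g` by the largest multiple of `h` that keeps every point of `T` below level `g u`
  obtain ⟨t₀, ht₀, hmin⟩ := (T.filter fun t ↦ 0 < h t).exists_min_image
    (fun t ↦ (g u - g t) / h t) ⟨s, Finset.mem_filter.2 ⟨hs, hs1 ▸ one_pos⟩⟩
  rw [Finset.mem_filter] at ht₀
  set c := (g u - g t₀) / h t₀
  have hc : 0 ≤ c := div_nonneg (sub_nonneg.2 (hlt t₀ ht₀.1 ht₀.2).le) ht₀.2.le
  set g' := g + c • h
  have hg' : ∀ x, g' x = g x + c * h x := fun _ ↦ rfl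
  have hbound : ∀ t ∈ T, g' t ≤ g u := fun t ht ↦ by
    rw [hg']
    rcases le_or_gt (h t) 0 with hneg | hpos
    · nlinarith [hu.2 t (subset_convexHull ℝ _ ht)]
    · have := hmin t (Finset.mem_filter.2 ⟨ht, hpos⟩)
      rw [le_div_iff₀ hpos] at this
      linarith
  have hmem : ∀ x ∈ convexHull ℝ (T : Set E), g' x = g u →
      x ∈ exposedFace (convexHull ℝ (T : Set E)) g' := fun x hx hx' ↦
    mem_exposedFace_convexHull_iff.2 ⟨hx, fun t ht ↦ hx' ▸ hbound t ht⟩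
  have hgA : ∀ x ∈ A, g' x = g u := fun x hx ↦ by
    rw [hg', hA0 x hx, mul_zero, add_zero]
    exact le_antisymm (hu.2 x hx.1) (hx.2 u hu.1)
  have ht₀' : g' t₀ = g u := by
    rw [hg', div_mul_cancel₀ _ ht₀.2.ne']
    ring
  refine ⟨g', (ssubset_iff_of_subset fun x hx ↦ hmem x hx.1 (hgA x hx)).2
    ⟨t₀, hmem t₀ (subset_convexHull ℝ _ ht₀.1) ht₀', fun ht₀A ↦ ht₀.2.ne' (hA0 t₀ ht₀A)⟩,
    fun hv ↦ hvA ⟨hv.1, fun y hy ↦ (hu.2 y hy).trans ?_⟩⟩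
  have := hv.2 u hu.1
  rw [hgA u hu, hg', h0 v (mem_insert v A), mul_zero, add_zero] at this
  exact this

lemma IsExtreme.pdim_lt_of_ssubset {A B : Set E}
    (hA : IsExtreme ℝ (convexHull ℝ (T : Set E)) A) (hB : IsExtreme ℝ (convexHull ℝ (T : Set E)) B)
    (hAc : Convex ℝ A) (hBc : Convex ℝ B) (hAne : A.Nonempty) (hAB : A ⊂ B) : pdim A < pdim B := by
  obtain ⟨S, rfl⟩ := hB.exists_finset_eq_convexHull hBc
  exact (hA.mono hB.subset hAB.subset).pdim_lt hAc hAne hAB.ne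

lemma exists_mem_notMem_affineSpan_insert {A : Set E} {v : E}
    (hA : A ⊆ convexHull ℝ (T : Set E)) (hv : v ∈ convexHull ℝ (T : Set E))
    (hdim : pdim A + 1 < pdim (convexHull ℝ (T : Set E))) :
    ∃ s ∈ T, s ∉ affineSpan ℝ (insert v A) := by
  by_contra! hT
  have : FiniteDimensional ℝ (affineSpan ℝ (insert v A)).direction :=
    finiteDimensional_direction_of_subset_convexHull (insert_subset hv hA)
  have := pdim_le_of_subset_affineSpan (convexHull_min hT (AffineSubspace.convex _))
  have := pdim_insert_le v A
  omega

lemma exists_isFacet_of_exposedFace {g : E →ᵃ[ℝ] ℝ} {u v : E}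
    (hu : u ∈ exposedFace (convexHull ℝ (T : Set E)) g) (hv : v ∈ T)
    (hvA : v ∉ exposedFace (convexHull ℝ (T : Set E)) g) :
    ∃ F, IsFacet (convexHull ℝ (T : Set E)) F ∧ u ∈ F ∧ v ∉ F := by
  set P := convexHull ℝ (T : Set E)
  have : FiniteDimensional ℝ (affineSpan ℝ P).direction :=
    finiteDimensional_direction_of_subset_convexHull subset_rfl
  induction hk : pdim P - pdim (exposedFace P g) using Nat.strong_induction_on generalizing g
    with | _ k ih =>
  have hext (g) : IsExtreme ℝ P (exposedFace P g) := isExtreme_exposedFace P g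
  have hconv (g) : Convex ℝ (exposedFace P g) := convex_exposedFace (convex_convexHull ℝ _) g
  have hlt : pdim (exposedFace P g) < pdim P := (hext g).pdim_lt (hconv g) ⟨u, hu⟩ fun hAP ↦
    hvA (hAP ▸ subset_convexHull ℝ _ hv)
  by_cases hfacet : pdim (exposedFace P g) + 1 = pdim P
  · exact ⟨_, ⟨⟨u, hu⟩, ⟨hext g, hconv g⟩, hfacet⟩, hu, hvA⟩
  obtain ⟨s, hs, hsA⟩ := exists_mem_notMem_affineSpan_insert (hext g).subset
    (subset_convexHull ℝ _ hv) (show _ < pdim P by omega)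
  obtain ⟨g', hAB, hvB⟩ := exists_exposedFace_ssuperset ⟨u, hu⟩ hvA hs hsA
  have := (hext g).pdim_lt_of_ssubset (hext g') (hconv g) (hconv g') ⟨u, hu⟩ hAB
  have : pdim (exposedFace P g') ≤ pdim P :=
    pdim_le_of_subset_affineSpan ((hext g').subset.trans (subset_affineSpan ℝ P))
  exact ih _ (by omega) (hAB.subset hu) hvB rfl

lemma exists_isFacet_mem_notMem {u v : E} (hu : u ∈ T) (hv : v ∈ T) (huv : u ≠ v)
    (hind : u ∉ convexHull ℝ ((T : Set E) \ {u})) :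
    ∃ F, IsFacet (convexHull ℝ (T : Set E)) F ∧ u ∈ F ∧ v ∉ F := by
  obtain ⟨ℓ, hℓ⟩ := exists_linearMap_lt_of_notMem_convexHull T.finite_toSet.sdiff hind
  refine exists_isFacet_of_exposedFace (g := ℓ.toAffineMap) ?_ hv fun hvF ↦
    (hℓ v ⟨hv, huv.symm⟩).not_ge (hvF.2 u (subset_convexHull ℝ _ hu))
  refine mem_exposedFace_convexHull_iff.2 ⟨subset_convexHull ℝ _ hu, fun t ht ↦ ?_⟩
  by_cases htu : t = u
  · rw [htu]
  · exact (hℓ t ⟨ht, htu⟩).le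

end Facets

theorem isPyramidWithApex_of_ncard_setOf_isFacet_notMem_eq_one {S : Finset E} {v : E}
    (hv : v ∈ (convexHull ℝ (S : Set E)).extremePoints ℝ)
    (h : {A : Set E | IsFacet (convexHull ℝ (S : Set E)) A ∧ v ∉ A}.ncard = 1) :
    IsPyramidWithApex (convexHull ℝ (S : Set E)) v := by
  obtain ⟨T, hTS, hind⟩ := exists_finset_convexHull_eq_notMem_convexHull_sdiff S
  rw [← hTS] at hv h ⊢
  have hvT : v ∈ T := by exact_mod_cast extremePoints_convexHull_subset hv
  obtain ⟨F, hF⟩ := ncard_eq_one.1 h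
  obtain ⟨⟨hFne, ⟨hFext, hFc⟩, hFdim⟩, hvF⟩ : IsFacet (convexHull ℝ (T : Set E)) F ∧ v ∉ F :=
    (hF.symm ▸ mem_singleton F : F ∈ {A | IsFacet (convexHull ℝ (T : Set E)) A ∧ v ∉ A})
  have hTF : (T : Set E) ⊆ insert v F := fun u hu ↦ by
    by_cases huv : u = v
    · exact .inl huv
    obtain ⟨G, hG, huG, hvG⟩ := exists_isFacet_mem_notMem hu hvT huv (hind u hu)
    have : G ∈ ({F} : Set (Set E)) := hF ▸ ⟨hG, hvG⟩
    exact .inr (this ▸ huG)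
  have hPF : convexHull ℝ (T : Set E) = convexHull ℝ (F ∪ {v}) := by
    rw [union_singleton]
    exact (convexHull_mono hTF).antisymm
      (convexHull_min (insert_subset hv.1 hFext.subset) (convex_convexHull ℝ _))
  obtain ⟨TF, rfl⟩ := hFext.exists_finset_eq_convexHull hFc
  refine ⟨_, ⟨TF, convexHull_nonempty_iff.1 hFne, rfl⟩, hFdim, fun hvF' ↦ ?_, hPF⟩
  have : pdim (convexHull ℝ (T : Set E)) = pdim (convexHull ℝ (TF : Set E)) := by
    rw [hPF, pdim_convexHull, union_singleton, pdim, pdim, affineSpan_insert_eq_affineSpan ℝ hvF']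
  omega

end

theorem stmt9_general {E : Type*} [AddCommGroup E] [Module ℝ E]
    (P : Set E) (hP : IsPolytope P)
    (v : E) (hv : v ∈ P.extremePoints ℝ) :
    IsPyramidWithApex P v ↔ {A : Set E | IsFacet P A ∧ v ∉ A}.ncard = 1 := by
  obtain ⟨S, -, rfl⟩ := hP
  exact ⟨IsPyramidWithApex.ncard_setOf_isFacet_notMem_eq_one,
    isPyramidWithApex_of_ncard_setOf_isFacet_notMem_eq_one hv⟩

/-- A d-polytope P (d ≥ 1) is a pyramid with apex v iff exactly one facet
of P does not contain the vertex v. -/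
theorem stmt9 {E : Type*} [AddCommGroup E] [Module ℝ E]
    (P : Set E) (hP : IsPolytope P) (hd : 1 ≤ pdim P)
    (v : E) (hv : v ∈ P.extremePoints ℝ) :
    IsPyramidWithApex P v ↔ {A : Set E | IsFacet P A ∧ v ∉ A}.ncard = 1 :=
  stmt9_general P hP v hv
end
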